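/- For every real t with 0 < t < 2: (i) Ỹ₁(t)·Z̃₁(t)² = Y₁(t)·Z₁(t)²; (ii) Ỹ₂(t)²·Z̃₂(t)² = Y₂(t)²·Z₂(t)²; (iii) Ỹ₃(t)³·Z̃₃(t)² = Y₃(t)³·Z₃(t)². Equivalently, with Y_{1,s} := Ỹ_s/Y_s and Z_{11,s} := Z̃_s/Z_s, one has Y_{1,s}^s·Z_{11,s}² = 1 for s = 1, 2, 3. -/

import Mathlib

/-! Göttsche–Kool universal functions of a real variable `t`, with all square
roots the nonnegative real square roots.  The `t`-suffixed versions
(`gkYt`, `gkZt`, `gkSt`) are the sign-flipped functions obtained by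
replacing `√t` with `−√t`. -/

noncomputable def gkY1 (t : ℝ) : ℝ := (1 + t) + Real.sqrt t * Real.sqrt (1 + 3*t/4)
noncomputable def gkYt1 (t : ℝ) : ℝ := (1 + t) - Real.sqrt t * Real.sqrt (1 + 3*t/4)
noncomputable def gkY2 (t : ℝ) : ℝ := Real.sqrt t + Real.sqrt (1 + t)
noncomputable def gkYt2 (t : ℝ) : ℝ := -Real.sqrt t + Real.sqrt (1 + t)
noncomputable def gkY3 (t : ℝ) : ℝ := 1 + Real.sqrt t * Real.sqrt (1 - t/4)
noncomputable def gkYt3 (t : ℝ) : ℝ := 1 - Real.sqrt t * Real.sqrt (1 - t/4)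
noncomputable def gkZ1 (t : ℝ) : ℝ :=
  (1 + 3*t/4 - (1/2) * Real.sqrt t * Real.sqrt (1 + 3*t/4)) / (1 + t/2)
noncomputable def gkZt1 (t : ℝ) : ℝ :=
  (1 + 3*t/4 + (1/2) * Real.sqrt t * Real.sqrt (1 + 3*t/4)) / (1 + t/2)
noncomputable def gkZ2 (t : ℝ) : ℝ := 1 + t - Real.sqrt t * Real.sqrt (1 + t)
noncomputable def gkZt2 (t : ℝ) : ℝ := 1 + t + Real.sqrt t * Real.sqrt (1 + t)
noncomputable def gkZ3 (t : ℝ) : ℝ :=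
  (1 + t/2) * ((1 - t/4)*(1 + t/2)
    - (3/2) * Real.sqrt t * Real.sqrt (1 - t/4) * (1 - t/6)) / (1 - t/2)^3
noncomputable def gkZt3 (t : ℝ) : ℝ :=
  (1 + t/2) * ((1 - t/4)*(1 + t/2)
    + (3/2) * Real.sqrt t * Real.sqrt (1 - t/4) * (1 - t/6)) / (1 - t/2)^3
noncomputable def gkS1 (t : ℝ) : ℝ := -t/2 + Real.sqrt t * Real.sqrt (1 + 3*t/4)
noncomputable def gkSt1 (t : ℝ) : ℝ := -t/2 - Real.sqrt t * Real.sqrt (1 + 3*t/4)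
noncomputable def gkS2 (t : ℝ) : ℝ := -t + Real.sqrt t * Real.sqrt (1 + t)
noncomputable def gkSt2 (t : ℝ) : ℝ := -t - Real.sqrt t * Real.sqrt (1 + t)
noncomputable def gkS3 (t : ℝ) : ℝ :=
  (-(3/2)*t*(1 - t/6) + Real.sqrt t * Real.sqrt (1 - t/4) * (1 + t/2)) / (1 - t/2)
noncomputable def gkSt3 (t : ℝ) : ℝ :=
  (-(3/2)*t*(1 - t/6) - Real.sqrt t * Real.sqrt (1 - t/4) * (1 + t/2)) / (1 - t/2)
noncomputable def gkV2 (t : ℝ) : ℝ := (1 + t)^2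
noncomputable def gkV3 (t : ℝ) : ℝ := (1 + t/2)^3 / (1 - t/2)
noncomputable def gkW1 (t : ℝ) : ℝ := (1 + t/2)⁻¹
noncomputable def gkW2 (t : ℝ) : ℝ := (Real.sqrt (1 + t))⁻¹
noncomputable def gkW3 (t : ℝ) : ℝ := 2 / (2 + t)
noncomputable def gkX1 (t : ℝ) : ℝ :=
  (1 + t/2) ^ (-(3:ℝ)/4) * (1 + 3*t/4) ^ (-(1:ℝ)/2)
noncomputable def gkX2 (t : ℝ) : ℝ := (1 + t) ^ (-(3:ℝ)/2)
noncomputable def gkX3 (t : ℝ) : ℝ :=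
  (1 - t/2) ^ ((3:ℝ)/4) * (1 - t/4) ^ (-(1:ℝ)/2) * (1 + t/2) ^ (-(4:ℝ))

/-! Let `r` be the product of square roots in family `s`, so that `r² = t·q(t)` and the sign
flip is `r ↦ -r`. In each family `Z̃_s² = c_s · Y_s^s` with `c_s` even in `r`, hence also
`Z_s² = c_s · Ỹ_s^s`, and both sides of the identity equal `c_s · (Y_s Ỹ_s)^s`. The underlying
identities are `(q + r/2)² = q·(1 + t + r)` for `q = 1 + 3t/4`,
`1 + t + √t·√(1+t) = √(1+t)·(√t + √(1+t))`, and `(q(1 + t/2) + (3/2)·r·(1 - t/6))² = q·(1 + r)³`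
for `q = 1 - t/4`. The ratios are defined because the norms `Y_s Ỹ_s` are `(1 + t/2)²`, `1` and
`(1 - t/2)²`, none of which vanishes for `0 ≤ t < 2`. -/

theorem sqrt_mul_sqrt_sq {a b : ℝ} (ha : 0 ≤ a) (hb : 0 ≤ b) : (√a * √b) ^ 2 = a * b := by
  rw [← Real.sqrt_mul ha, Real.sq_sqrt (mul_nonneg ha hb)]

theorem pow_mul_sq_eq_of_sq_eq_mul_pow {M : Type*} [CommMonoid M] {y y' z z' c : M} {s : ℕ}
    (hz : z ^ 2 = c * y' ^ s) (hz' : z' ^ 2 = c * y ^ s) : y' ^ s * z' ^ 2 = y ^ s * z ^ 2 := by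
  rw [hz, hz']
  ac_rfl

theorem div_pow_mul_div_sq_eq_one_of_sq_eq_mul_pow {K : Type*} [Field K] {y y' z z' c : K}
    {s : ℕ} (hc : c ≠ 0) (hyy' : y * y' ≠ 0) (hz : z ^ 2 = c * y' ^ s)
    (hz' : z' ^ 2 = c * y ^ s) : (y' / y) ^ s * (z' / z) ^ 2 = 1 := by
  have hz0 : z ^ 2 ≠ 0 := hz ▸ mul_ne_zero hc (pow_ne_zero s (right_ne_zero_of_mul hyy'))
  rw [div_pow, div_pow, div_mul_div_comm, pow_mul_sq_eq_of_sq_eq_mul_pow hz hz',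
    div_self (mul_ne_zero (pow_ne_zero s (left_ne_zero_of_mul hyy')) hz0)]

section
variable {t : ℝ}

theorem gkY1_mul_gkYt1 (ht : 0 ≤ t) : gkY1 t * gkYt1 t = (1 + t / 2) ^ 2 := by
  unfold gkY1 gkYt1
  linear_combination -sqrt_mul_sqrt_sq ht (by positivity : (0:ℝ) ≤ 1 + 3 * t / 4)

theorem gkZ1_sq (ht : 0 ≤ t) : gkZ1 t ^ 2 = (1 + 3 * t / 4) / (1 + t / 2) ^ 2 * gkYt1 t := by
  unfold gkZ1 gkYt1
  rw [div_pow]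
  linear_combination (1 / 4) / (1 + t / 2) ^ 2 *
    sqrt_mul_sqrt_sq ht (by positivity : (0:ℝ) ≤ 1 + 3 * t / 4)

theorem gkZt1_sq (ht : 0 ≤ t) : gkZt1 t ^ 2 = (1 + 3 * t / 4) / (1 + t / 2) ^ 2 * gkY1 t := by
  unfold gkZt1 gkY1
  rw [div_pow]
  linear_combination (1 / 4) / (1 + t / 2) ^ 2 *
    sqrt_mul_sqrt_sq ht (by positivity : (0:ℝ) ≤ 1 + 3 * t / 4)

theorem gk_constraint_one (ht : 0 ≤ t) :
    gkYt1 t * gkZt1 t ^ 2 = gkY1 t * gkZ1 t ^ 2 ∧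
      (gkYt1 t / gkY1 t) * (gkZt1 t / gkZ1 t) ^ 2 = 1 := by
  have hz : gkZ1 t ^ 2 = (1 + 3 * t / 4) / (1 + t / 2) ^ 2 * gkYt1 t ^ 1 := by
    rw [pow_one, gkZ1_sq ht]
  have hz' : gkZt1 t ^ 2 = (1 + 3 * t / 4) / (1 + t / 2) ^ 2 * gkY1 t ^ 1 := by
    rw [pow_one, gkZt1_sq ht]
  have hnorm : gkY1 t * gkYt1 t ≠ 0 := by rw [gkY1_mul_gkYt1 ht]; positivity
  have h := And.intro (pow_mul_sq_eq_of_sq_eq_mul_pow hz hz')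
    (div_pow_mul_div_sq_eq_one_of_sq_eq_mul_pow (by positivity) hnorm hz hz')
  simpa only [pow_one] using h

theorem gkY2_mul_gkYt2 (ht : 0 ≤ t) : gkY2 t * gkYt2 t = 1 := by
  unfold gkY2 gkYt2
  linear_combination Real.sq_sqrt (by positivity : (0:ℝ) ≤ 1 + t) - Real.sq_sqrt ht

theorem gkZ2_sq (ht : 0 ≤ t) : gkZ2 t ^ 2 = (1 + t) * gkYt2 t ^ 2 := by
  unfold gkZ2 gkYt2
  linear_combination (√t ^ 2 - (1 + t)) * Real.sq_sqrt (by positivity : (0:ℝ) ≤ 1 + t)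

theorem gkZt2_sq (ht : 0 ≤ t) : gkZt2 t ^ 2 = (1 + t) * gkY2 t ^ 2 := by
  unfold gkZt2 gkY2
  linear_combination (√t ^ 2 - (1 + t)) * Real.sq_sqrt (by positivity : (0:ℝ) ≤ 1 + t)

theorem gk_constraint_two (ht : 0 ≤ t) :
    gkYt2 t ^ 2 * gkZt2 t ^ 2 = gkY2 t ^ 2 * gkZ2 t ^ 2 ∧
      (gkYt2 t / gkY2 t) ^ 2 * (gkZt2 t / gkZ2 t) ^ 2 = 1 := by
  have hnorm : gkY2 t * gkYt2 t ≠ 0 := by rw [gkY2_mul_gkYt2 ht]; exact one_ne_zero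
  exact ⟨pow_mul_sq_eq_of_sq_eq_mul_pow (gkZ2_sq ht) (gkZt2_sq ht),
    div_pow_mul_div_sq_eq_one_of_sq_eq_mul_pow (by positivity) hnorm (gkZ2_sq ht) (gkZt2_sq ht)⟩

theorem gkY3_mul_gkYt3 (ht : 0 ≤ t) (ht4 : t ≤ 4) : gkY3 t * gkYt3 t = (1 - t / 2) ^ 2 := by
  unfold gkY3 gkYt3
  linear_combination -sqrt_mul_sqrt_sq ht (by linarith : (0:ℝ) ≤ 1 - t / 4)

theorem gkZ3_sq (ht : 0 ≤ t) (ht4 : t ≤ 4) :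
    gkZ3 t ^ 2 = (1 - t / 4) * (1 + t / 2) ^ 2 / (1 - t / 2) ^ 6 * gkYt3 t ^ 3 := by
  unfold gkZ3 gkYt3
  rw [div_pow]
  linear_combination (1 + t / 2) ^ 2 / (1 - t / 2) ^ 6 *
      ((1 - t / 4) * (√t * √(1 - t / 4)) + 9 / 4 * (1 - t / 6) ^ 2 - 3 * (1 - t / 4)) *
    sqrt_mul_sqrt_sq ht (by linarith : (0:ℝ) ≤ 1 - t / 4)

theorem gkZt3_sq (ht : 0 ≤ t) (ht4 : t ≤ 4) :
    gkZt3 t ^ 2 = (1 - t / 4) * (1 + t / 2) ^ 2 / (1 - t / 2) ^ 6 * gkY3 t ^ 3 := by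
  unfold gkZt3 gkY3
  rw [div_pow]
  linear_combination (1 + t / 2) ^ 2 / (1 - t / 2) ^ 6 *
      (-(1 - t / 4) * (√t * √(1 - t / 4)) + 9 / 4 * (1 - t / 6) ^ 2 - 3 * (1 - t / 4)) *
    sqrt_mul_sqrt_sq ht (by linarith : (0:ℝ) ≤ 1 - t / 4)

theorem gk_constraint_three (ht : 0 ≤ t) (ht2 : t < 2) :
    gkYt3 t ^ 3 * gkZt3 t ^ 2 = gkY3 t ^ 3 * gkZ3 t ^ 2 ∧
      (gkYt3 t / gkY3 t) ^ 3 * (gkZt3 t / gkZ3 t) ^ 2 = 1 := by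
  have ht4 : t ≤ 4 := by linarith
  have h2 : 0 < 1 - t / 2 := by linarith
  have h4 : 0 < 1 - t / 4 := by linarith
  have hnorm : gkY3 t * gkYt3 t ≠ 0 := by rw [gkY3_mul_gkYt3 ht ht4]; positivity
  exact ⟨pow_mul_sq_eq_of_sq_eq_mul_pow (gkZ3_sq ht ht4) (gkZt3_sq ht ht4),
    div_pow_mul_div_sq_eq_one_of_sq_eq_mul_pow (by positivity) hnorm (gkZ3_sq ht ht4)
      (gkZt3_sq ht ht4)⟩

end

/-- for `0 < t < 2`, one has `Ỹ_s^s Z̃_s² = Y_s^s Z_s²` for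
`s = 1, 2, 3`; equivalently, with `Y_{1,s} = Ỹ_s/Y_s` and
`Z_{11,s} = Z̃_s/Z_s`, the constraint `Y_{1,s}^s Z_{11,s}² = 1` holds. -/
theorem stmt_11 (t : ℝ) (ht0 : 0 < t) (ht2 : t < 2) :
    (gkYt1 t * gkZt1 t ^ 2 = gkY1 t * gkZ1 t ^ 2 ∧
     gkYt2 t ^ 2 * gkZt2 t ^ 2 = gkY2 t ^ 2 * gkZ2 t ^ 2 ∧
     gkYt3 t ^ 3 * gkZt3 t ^ 2 = gkY3 t ^ 3 * gkZ3 t ^ 2) ∧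
    ((gkYt1 t / gkY1 t) * (gkZt1 t / gkZ1 t) ^ 2 = 1 ∧
     (gkYt2 t / gkY2 t) ^ 2 * (gkZt2 t / gkZ2 t) ^ 2 = 1 ∧
     (gkYt3 t / gkY3 t) ^ 3 * (gkZt3 t / gkZ3 t) ^ 2 = 1) := by
  obtain ⟨e1, r1⟩ := gk_constraint_one ht0.le
  obtain ⟨e2, r2⟩ := gk_constraint_two ht0.le
  obtain ⟨e3, r3⟩ := gk_constraint_three ht0.le ht2
  exact ⟨⟨e1, e2, e3⟩, r1, r2, r3⟩
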